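/- arXiv:1209.3508 — 4 statements merged into one kernel-verified Lean document; each statement's English description precedes it below -/
import Mathlib

section
/- Let A be a unital C*-algebra, B a unital C*-subalgebra, and E : A → B a unital positive linear map. If a ∈ A has Im a strictly positive, then: a is invertible, Im(E[a^{-1}]) is strictly negative (i.e. −Im E[a^{-1}] is strictly positive, so in particular E[a^{-1}] is invertible), (Im a)^{-1} exists with E[(Im a)^{-1}] strictly positive, and Im( E[a^{-1}]^{-1} ) ≥ E[(Im a)^{-1}]^{-1}. -/
/-
Write `k = Im a > 0`. Then `Im a⁻¹ = -a⁻¹ k a⁻¹*`, so `P := -Im a⁻¹ > 0`, and positivity of `E`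
gives `-Im E[a⁻¹] = E[P] > 0`; an element whose imaginary part is definite is invertible, since
after normalising the imaginary part to `1` it is `h + i` with `h` selfadjoint. As
`k⁻¹ = (a⁻¹)* P⁻¹ a⁻¹` and `Im (b⁻¹) = (b* E[P]⁻¹ b)⁻¹` for `b = E[a⁻¹]`, the last claim is,
after inverting, the Schwarz-type inequality `E[x]* E[P]⁻¹ E[x] ≤ E[x* P⁻¹ x]` for `x = a⁻¹`.
Conjugating so that `P` and `E[P]` become `1` turns `x` into `h - i` with `h` selfadjoint, and the
inequality becomes Kadison's inequality `ψ(h)² ≤ ψ(h²)` for a unital positive map `ψ`.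

Kadison's inequality follows by approximating `h` by `∑ λⱼ eⱼ(h)` for a partition of unity
`(eⱼ)` by tent functions of small width: the `qⱼ = ψ(eⱼ(h))` are positive with `∑ qⱼ = 1`, and for
those `(∑ λⱼ qⱼ)² ≤ ∑ λⱼ² qⱼ` because the difference is `∑ (λⱼ - s) qⱼ (λⱼ - s)` with `s = ∑ λⱼ qⱼ`.
-/

noncomputable section

/-- The imaginary part `Im a = (a - a*)/(2i)` of an element of a complex star algebra. -/
def aIm {A : Type*} [NonUnitalRing A] [StarRing A] [Module ℂ A] (a : A) : A :=
  ((2 * Complex.I)⁻¹ : ℂ) • (a - star a)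

/-- `k > 0`: `k` is selfadjoint, nonnegative and invertible. -/
def StrictlyPos {A : Type*} [Ring A] [StarRing A] [PartialOrder A] (k : A) : Prop :=
  IsSelfAdjoint k ∧ 0 ≤ k ∧ IsUnit k

open Filter Topology Finset Set ComplexStarModule
open scoped Ring

section ImaginaryPart

variable {A : Type*} [Ring A] [StarRing A] [Algebra ℂ A]

lemma aIm_eq_imaginaryPart [StarModule ℂ A] (a : A) : aIm a = ℑ a := by
  rw [aIm, imaginaryPart_apply_coe, ← Complex.coe_smul, smul_smul]
  congr 1
  rw [mul_inv, Complex.inv_I]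
  push_cast
  ring

lemma realPart_add_I_smul_aIm [StarModule ℂ A] (a : A) : (ℜ a : A) + Complex.I • aIm a = a := by
  rw [aIm_eq_imaginaryPart, realPart_add_I_smul_imaginaryPart]

lemma aIm_neg (a : A) : aIm (-a) = -aIm a := by
  rw [aIm, aIm, star_neg, neg_sub_neg, ← neg_sub, smul_neg]

lemma aIm_mul_mul_star (c a : A) : aIm (c * a * star c) = c * aIm a * star c := by
  rw [aIm, aIm, star_mul, star_mul, star_star, ← mul_assoc, mul_smul_comm, smul_mul_assoc,
    mul_sub, sub_mul]

lemma aIm_ringInverse {a : A} (ha : IsUnit a) : aIm a⁻¹ʳ = -(a⁻¹ʳ * aIm a * star a⁻¹ʳ) := by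
  have h : a⁻¹ʳ * (a - star a) * star a⁻¹ʳ = star a⁻¹ʳ - a⁻¹ʳ := by
    rw [mul_sub, sub_mul, Ring.inverse_mul_cancel a ha, one_mul, mul_assoc, ← star_mul,
      Ring.inverse_mul_cancel a ha, star_one, mul_one]
  rw [aIm, aIm, mul_smul_comm, smul_mul_assoc, h, ← smul_neg, neg_sub]

lemma map_aIm {B F : Type*} [Ring B] [StarRing B] [Algebra ℂ B] [FunLike F A B]
    [LinearMapClass F ℂ A B] [StarHomClass F A B] (f : F) (a : A) : f (aIm a) = aIm (f a) := by
  rw [aIm, aIm, map_smul, map_sub, map_star]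

end ImaginaryPart

lemma IsUnit.ringInverse_mul_mul_star {R : Type*} [Semiring R] [StarRing R] {u : R}
    (hu : IsUnit u) (k : R) : (u * k * star u)⁻¹ʳ = star u⁻¹ʳ * k⁻¹ʳ * u⁻¹ʳ := by
  rw [Ring.inverse_mul (.inr hu.star), Ring.inverse_mul (.inl hu), Ring.inverse_star, mul_assoc]

lemma IsUnit.ringInverse_star_mul_mul {R : Type*} [Semiring R] [StarRing R] {u : R}
    (hu : IsUnit u) (k : R) : (star u * k * u)⁻¹ʳ = u⁻¹ʳ * k⁻¹ʳ * star u⁻¹ʳ := by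
  simpa [Ring.inverse_star] using hu.star.ringInverse_mul_mul_star k

lemma Units.ringInverse_mul_star {R : Type*} [MonoidWithZero R] [StarMul R] (u : Rˣ) :
    (↑u * star ↑u : R)⁻¹ʳ = star ↑u⁻¹ * ↑u⁻¹ := by
  rw [← Units.coe_star, ← Units.val_mul, Ring.inverse_unit, mul_inv_rev, Units.val_mul,
    Units.coe_star_inv]

lemma star_add_smul_one_mul_self {R : Type*} [Ring R] [StarRing R] [Algebra ℂ R]
    [StarModule ℂ R] {x : R} (hx : IsSelfAdjoint x) (z : ℂ) :
    star (x + z • 1) * (x + z • 1) = x * x + ((star z + z) • x + (star z * z) • 1) := by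
  simp only [star_add, hx.star_eq, star_smul, star_one, add_mul, mul_add, smul_mul_assoc,
    mul_smul_comm, one_mul, mul_one]
  module

lemma sum_smul_mul_sum_smul_le {R ι : Type*} [Ring R] [StarRing R] [PartialOrder R]
    [StarOrderedRing R] [Algebra ℝ R] [StarModule ℝ R] (s : Finset ι) (lam : ι → ℝ)
    {q : ι → R} (hq : ∀ j ∈ s, 0 ≤ q j) (hsum : ∑ j ∈ s, q j = 1) :
    (∑ j ∈ s, lam j • q j) * (∑ j ∈ s, lam j • q j) ≤ ∑ j ∈ s, (lam j * lam j) • q j := by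
  set x := ∑ j ∈ s, lam j • q j
  have hx : IsSelfAdjoint x :=
    isSelfAdjoint_sum s fun j hj => (IsSelfAdjoint.all (lam j)).smul (.of_nonneg (hq j hj))
  have hexpand : ∑ j ∈ s, (algebraMap ℝ R (lam j) - x) * q j * (algebraMap ℝ R (lam j) - x) =
      ∑ j ∈ s, (lam j * lam j) • q j - x * x := by
    have hterm : ∀ j ∈ s, (algebraMap ℝ R (lam j) - x) * q j * (algebraMap ℝ R (lam j) - x) =
        (lam j * lam j) • q j - x * (lam j • q j) - (lam j • q j) * x + x * q j * x := by
      intro j _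
      simp only [Algebra.algebraMap_eq_smul_one, sub_mul, mul_sub, smul_mul_assoc, one_mul,
        mul_smul_comm, mul_one]
      module
    rw [sum_congr rfl hterm]
    simp only [sum_add_distrib, sum_sub_distrib, ← mul_sum, ← sum_mul, hsum, mul_one]
    abel
  rw [← sub_nonneg, ← hexpand]
  exact sum_nonneg fun j hj =>
    ((IsSelfAdjoint.algebraMap R (star_trivial _)).sub hx).conjugate_nonneg (hq j hj)

lemma cfc_sum_mul {A : Type*} [Ring A] [StarRing A] [TopologicalSpace A] [Algebra ℝ A]
    {p : A → Prop} [ContinuousFunctionalCalculus ℝ A p] {ι : Type*} (s : Finset ι) (c : ι → ℝ)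
    {e : ι → ℝ → ℝ} (a : A) (he : ∀ j ∈ s, ContinuousOn (e j) (spectrum ℝ a)) :
    cfc (fun t => ∑ j ∈ s, c j * e j t) a = ∑ j ∈ s, c j • cfc (e j) a := by
  rw [← sum_fn, cfc_sum (fun j t => c j * e j t) a s fun j hj => continuousOn_const.mul (he j hj)]
  exact sum_congr rfl fun j hj => cfc_const_mul (c j) (e j) a (he j hj)

lemma IsSelfAdjoint.isUnit_add_I_smul_one {A : Type*} [CStarAlgebra A] {x : A}
    (hx : IsSelfAdjoint x) : IsUnit (x + Complex.I • 1) := by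
  have hI : -Complex.I ∉ spectrum ℂ x := fun hI => by
    simpa [Complex.ext_iff] using hx.mem_spectrum_eq_re hI
  have h := (spectrum.notMem_iff.1 hI).neg
  rwa [Algebra.algebraMap_eq_smul_one, neg_smul, neg_sub, sub_neg_eq_add] at h

section CStarAlgebra

variable {A : Type*} [CStarAlgebra A] [PartialOrder A] [StarOrderedRing A]

lemma strictlyPos_iff_isStrictlyPositive {k : A} : StrictlyPos k ↔ IsStrictlyPositive k :=
  ⟨fun hk => hk.2.2.isStrictlyPositive hk.2.1, fun hk => ⟨hk.isSelfAdjoint, hk.nonneg, hk.isUnit⟩⟩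

lemma isUnit_of_isStrictlyPositive_aIm {a : A} (ha : IsStrictlyPositive (aIm a)) : IsUnit a := by
  obtain ⟨u, hu, hau⟩ := CStarAlgebra.isStrictlyPositive_iff_eq_mul_star_self.1 ha
  lift u to Aˣ using hu
  have hy : aIm (↑u⁻¹ * a * star ↑u⁻¹) = 1 := by
    rw [aIm_mul_mul_star, hau, ← mul_assoc, Units.inv_mul, one_mul, ← star_mul, Units.inv_mul,
      star_one]
  have := (ℜ (↑u⁻¹ * a * star ↑u⁻¹ : A)).2.isUnit_add_I_smul_one
  rw [← hy, realPart_add_I_smul_aIm, ← Units.coe_star, Units.isUnit_mul_units,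
    Units.isUnit_units_mul] at this
  exact this

lemma isUnit_of_isStrictlyPositive_neg_aIm {a : A} (ha : IsStrictlyPositive (-aIm a)) :
    IsUnit a :=
  (IsUnit.neg_iff a).1 (isUnit_of_isStrictlyPositive_aIm (by rwa [aIm_neg]))

lemma isStrictlyPositive_neg_aIm_ringInverse {a : A} (ha : IsStrictlyPositive (aIm a)) :
    IsStrictlyPositive (-aIm a⁻¹ʳ) := by
  have haU := isUnit_of_isStrictlyPositive_aIm ha
  rw [aIm_ringInverse haU, neg_neg]
  exact haU.ringInverse.isStrictlyPositive_star_right_conjugate_iff.2 ha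

end CStarAlgebra

def ramp (u : ℝ) : ℝ := max 0 (min 1 u)

lemma monotone_ramp : Monotone ramp := fun _ _ h => max_le_max le_rfl (min_le_min le_rfl h)

@[fun_prop]
lemma continuous_ramp : Continuous ramp := by unfold ramp; fun_prop

lemma ramp_of_nonpos {u : ℝ} (hu : u ≤ 0) : ramp u = 0 := by
  simp [ramp, min_le_of_right_le hu]

lemma ramp_of_one_le {u : ℝ} (hu : 1 ≤ u) : ramp u = 1 := by
  simp [ramp, min_eq_left hu]

/-- The hat function of half-width `w` centred at `c + j * w`, written as a difference of ramps so
that sums over consecutive `j` telescope. -/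
def tent (c w : ℝ) (j : ℕ) (t : ℝ) : ℝ := ramp ((t - c) / w - j + 1) - ramp ((t - c) / w - j)

lemma tent_nonneg (c w : ℝ) (j : ℕ) (t : ℝ) : 0 ≤ tent c w j t :=
  sub_nonneg.2 (monotone_ramp (by linarith))

@[fun_prop]
lemma continuous_tent (c w : ℝ) (j : ℕ) : Continuous (tent c w j) := by unfold tent; fun_prop

lemma sum_tent {c w t : ℝ} (hw : 0 < w) {n : ℕ} (hct : c ≤ t) (htn : t ≤ c + n * w) :
    ∑ j ∈ range (n + 1), tent c w j t = 1 := by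
  have hu : 0 ≤ (t - c) / w := div_nonneg (by linarith) hw.le
  have hun : (t - c) / w ≤ n := by rw [div_le_iff₀ hw]; linarith
  have hsum := Finset.sum_range_sub' (fun j : ℕ => ramp ((t - c) / w - j + 1)) (n + 1)
  simp only [Nat.cast_add, Nat.cast_one, Nat.cast_zero, sub_zero] at hsum
  rw [ramp_of_one_le (by linarith), ramp_of_nonpos (by linarith), sub_zero] at hsum
  rw [← hsum]
  refine sum_congr rfl fun j _ => ?_
  simp only [tent, sub_add_eq_sub_sub, sub_add_cancel]

lemma abs_sub_lt_of_tent_ne_zero {c w t : ℝ} (hw : 0 < w) {j : ℕ} (h : tent c w j t ≠ 0) :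
    |t - (c + j * w)| < w := by
  set u := (t - c) / w - j with hu
  have hlt : |u| < 1 := by
    rw [abs_lt]
    constructor
    · by_contra! hle
      exact h (by simp only [tent, ← hu, ramp_of_nonpos (by linarith : u + 1 ≤ 0),
        ramp_of_nonpos (by linarith : u ≤ 0), sub_self])
    · by_contra! hle
      exact h (by simp only [tent, ← hu, ramp_of_one_le hle,
        ramp_of_one_le (by linarith : 1 ≤ u + 1), sub_self])
  have : t - (c + j * w) = u * w := by rw [hu]; field_simp; ring
  rw [this, abs_mul, abs_of_pos hw]
  nlinarith [abs_nonneg u]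

def tentInterpolant (g : ℝ → ℝ) (c d w : ℝ) (t : ℝ) : ℝ :=
  ∑ j ∈ range (⌈(d - c) / w⌉₊ + 1), g (c + j * w) * tent c w j t

lemma sum_tent_of_mem_Icc {c d w t : ℝ} (hw : 0 < w) (ht : t ∈ Icc c d) :
    ∑ j ∈ range (⌈(d - c) / w⌉₊ + 1), tent c w j t = 1 := by
  refine sum_tent hw ht.1 ?_
  have := (div_le_iff₀ hw).1 (Nat.le_ceil ((d - c) / w))
  linarith [ht.2]

lemma abs_sub_sum_mul_le {ι : Type*} (s : Finset ι) {e y : ι → ℝ} {x ε : ℝ}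
    (he : ∀ j ∈ s, 0 ≤ e j) (hsum : ∑ j ∈ s, e j = 1)
    (hclose : ∀ j ∈ s, e j ≠ 0 → |x - y j| ≤ ε) :
    |x - ∑ j ∈ s, y j * e j| ≤ ε := by
  have hx : x - ∑ j ∈ s, y j * e j = ∑ j ∈ s, (x - y j) * e j := by
    simp only [sub_mul, sum_sub_distrib, ← mul_sum, hsum, mul_one]
  calc |x - ∑ j ∈ s, y j * e j| ≤ ∑ j ∈ s, |x - y j| * e j := by
        rw [hx]
        refine (abs_sum_le_sum_abs _ _).trans_eq (sum_congr rfl fun j hj => ?_)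
        rw [abs_mul, abs_of_nonneg (he j hj)]
    _ ≤ ∑ j ∈ s, ε * e j := by
        refine sum_le_sum fun j hj => ?_
        rcases eq_or_ne (e j) 0 with h0 | h0
        · simp [h0]
        · exact mul_le_mul_of_nonneg_right (hclose j hj h0) (he j hj)
    _ = ε := by rw [← mul_sum, hsum, mul_one]

lemma tendstoUniformlyOn_tentInterpolant {g : ℝ → ℝ} (hg : Continuous g) (c d : ℝ) :
    TendstoUniformlyOn (tentInterpolant g c d) g (𝓝[>] 0) (Icc c d) := by
  rw [Metric.tendstoUniformlyOn_iff]
  intro ε hε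
  obtain ⟨δ, hδ, hgδ⟩ := Metric.uniformContinuousOn_iff_le.1
    ((isCompact_Icc (a := c - 1) (b := d + 1)).uniformContinuousOn_of_continuous hg.continuousOn)
    (ε / 2) (half_pos hε)
  filter_upwards [Ioo_mem_nhdsGT (lt_min hδ one_pos)] with w hw t ht
  have hw0 : 0 < w := hw.1
  rw [Real.dist_eq]
  refine (abs_sub_sum_mul_le _ (fun j _ => tent_nonneg c w j t) (sum_tent_of_mem_Icc hw0 ht)
    fun j _ hj => ?_).trans_lt (half_lt_self hε)
  have hclose := abs_sub_lt_of_tent_ne_zero hw0 hj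
  have hw1 : w < 1 := hw.2.trans_le (min_le_right _ _)
  have hwδ : w < δ := hw.2.trans_le (min_le_left _ _)
  rw [abs_lt] at hclose
  refine hgδ t ⟨by linarith [ht.1], by linarith [ht.2]⟩ _
    ⟨by linarith [ht.1], by linarith [ht.2]⟩ ?_
  rw [Real.dist_eq, abs_le]
  constructor <;> linarith

namespace PositiveLinearMap

variable {A B : Type*} [CStarAlgebra A] [PartialOrder A] [StarOrderedRing A]
  [CStarAlgebra B] [PartialOrder B] [StarOrderedRing B]

lemma isStrictlyPositive_map (φ : A →ₚ[ℂ] B) (hφ : φ 1 = 1) {k : A}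
    (hk : IsStrictlyPositive k) : IsStrictlyPositive (φ k) := by
  rcases subsingleton_or_nontrivial A with _ | _
  · have : Subsingleton B := subsingleton_of_zero_eq_one <| by
      rw [← hφ, Subsingleton.elim (1 : A) 0, map_zero]
    exact .of_subsingleton
  obtain ⟨ε, hε, hεk⟩ := (CFC.exists_pos_algebraMap_le_iff hk.isSelfAdjoint).2
    fun t ht => hk.spectrum_pos ht
  have hεφk := OrderHomClass.mono φ hεk
  rw [Algebra.algebraMap_eq_smul_one, map_smul_of_tower, hφ, ← Algebra.algebraMap_eq_smul_one]
    at hεφk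
  exact (isStrictlyPositive_algebraMap hε).of_le hεφk

lemma isStrictlyPositive_neg_aIm_map (φ : A →ₚ[ℂ] B) (hφ : φ 1 = 1) {a : A}
    (ha : IsStrictlyPositive (-aIm a)) : IsStrictlyPositive (-aIm (φ a)) := by
  rw [← map_aIm, ← map_neg]
  exact isStrictlyPositive_map φ hφ ha

lemma map_cfc_sum_mul_self_le (φ : A →ₚ[ℂ] B) (hφ : φ 1 = 1) {h : A} (hh : IsSelfAdjoint h)
    {ι : Type*} (s : Finset ι) (lam : ι → ℝ) {e : ι → ℝ → ℝ}
    (he : ∀ j ∈ s, ContinuousOn (e j) (spectrum ℝ h))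
    (he₀ : ∀ j ∈ s, ∀ t ∈ spectrum ℝ h, 0 ≤ e j t)
    (hsum : ∀ t ∈ spectrum ℝ h, ∑ j ∈ s, e j t = 1) :
    φ (cfc (fun t => ∑ j ∈ s, lam j * e j t) h) * φ (cfc (fun t => ∑ j ∈ s, lam j * e j t) h) ≤
      φ (cfc (fun t => ∑ j ∈ s, (lam j * lam j) * e j t) h) := by
  have hsum' : ∑ j ∈ s, φ (cfc (e j) h) = 1 := by
    rw [← map_sum, ← cfc_sum _ h s he, cfc_congr (g := 1) fun t ht => by simp [hsum t ht],
      cfc_one ℝ h, hφ]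
  simp only [cfc_sum_mul s _ h he, map_sum, map_smul_of_tower]
  exact sum_smul_mul_sum_smul_le s lam (fun j hj => φ.map_nonneg (cfc_nonneg (he₀ j hj))) hsum'

/-- Kadison's inequality. -/
theorem map_mul_self_le (φ : A →ₚ[ℂ] B) (hφ : φ 1 = 1) {h : A} (hh : IsSelfAdjoint h) :
    φ h * φ h ≤ φ (h * h) := by
  set r := ‖h‖
  have hspec : spectrum ℝ h ⊆ Icc (-r) r := by
    intro t ht
    rcases subsingleton_or_nontrivial A with _ | _
    · simp [spectrum.of_subsingleton] at ht
    exact abs_le.1 (by simpa using spectrum.norm_le_norm_of_mem ht)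
  have happrox : ∀ g : ℝ → ℝ, Continuous g → Tendsto
      (fun w => φ (cfc (tentInterpolant g (-r) r w) h)) (𝓝[>] 0) (𝓝 (φ (cfc g h))) :=
    fun g hg => ((map_continuous φ).tendsto _).comp <|
      tendsto_cfc_fun ((tendstoUniformlyOn_tentInterpolant hg _ _).mono hspec)
        (Eventually.of_forall fun w => by unfold tentInterpolant; fun_prop)
  have hfinite : ∀ w > 0, φ (cfc (tentInterpolant id (-r) r w) h) *
      φ (cfc (tentInterpolant id (-r) r w) h) ≤
        φ (cfc (tentInterpolant (fun t => t * t) (-r) r w) h) :=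
    fun w hw => map_cfc_sum_mul_self_le φ hφ hh _ (fun j : ℕ => -r + j * w)
      (fun j _ => (continuous_tent _ _ j).continuousOn) (fun j _ t _ => tent_nonneg _ _ j t)
      fun t ht => sum_tent_of_mem_Icc hw (hspec ht)
  have hlim := le_of_tendsto_of_tendsto ((happrox id continuous_id).mul (happrox id continuous_id))
    (happrox (fun t => t * t) (by fun_prop)) (eventually_mem_nhdsWithin.mono hfinite)
  rwa [cfc_mul (fun t => t) (fun t => t) h, cfc_id' ℝ h, cfc_id ℝ h] at hlim

def conjugate (φ : A →ₚ[ℂ] B) (a : A) (b : B) : A →ₚ[ℂ] B :=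
  .mk₀ ((LinearMap.mulLeftRight ℂ (b, star b)).comp
      (φ.toLinearMap.comp (LinearMap.mulLeftRight ℂ (a, star a))))
    fun _ hz => star_right_conjugate_nonneg (φ.map_nonneg (star_right_conjugate_nonneg hz a)) b

lemma conjugate_apply (φ : A →ₚ[ℂ] B) (a : A) (b : B) (z : A) :
    φ.conjugate a b z = b * φ (a * z * star a) * star b := rfl

lemma star_map_mul_map_le_of_aIm_eq_smul_one (φ : A →ₚ[ℂ] B) (hφ : φ 1 = 1) {y : A} {s : ℝ}
    (hy : aIm y = s • 1) : star (φ y) * φ y ≤ φ (star y * y) := by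
  have hre : y = ℜ y + ((s : ℂ) * Complex.I) • 1 := by
    conv_lhs => rw [← realPart_add_I_smul_aIm y, hy]
    rw [← Complex.coe_smul, smul_smul, mul_comm]
  have hh := (ℜ y).2
  rw [hre, map_add, map_smul, hφ, star_add_smul_one_mul_self (hh.map' φ),
    star_add_smul_one_mul_self hh, map_add, map_add, map_smul, map_smul, hφ]
  exact add_le_add_left (map_mul_self_le φ hφ hh) _

theorem star_map_mul_ringInverse_mul_map_le (φ : A →ₚ[ℂ] B) (hφ : φ 1 = 1) {x : A}
    (hx : IsStrictlyPositive (-aIm x)) :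
    star (φ x) * (φ (-aIm x))⁻¹ʳ * φ x ≤ φ (star x * (-aIm x)⁻¹ʳ * x) := by
  obtain ⟨u, hu, hxu⟩ := CStarAlgebra.isStrictlyPositive_iff_eq_mul_star_self.1 hx
  obtain ⟨v, hv, hxv⟩ :=
    CStarAlgebra.isStrictlyPositive_iff_eq_mul_star_self.1 (isStrictlyPositive_map φ hφ hx)
  lift u to Aˣ using hu
  lift v to Bˣ using hv
  have hsu : star (↑u⁻¹ : A) = ↑(star u)⁻¹ := (Units.coe_star_inv u).symm
  have hsu' : star (↑u : A) = ↑(star u) := (Units.coe_star u).symm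
  set y := ↑u⁻¹ * x * star ↑u⁻¹
  have hxy : ↑u * y * star ↑u = x := by
    simp only [y, hsu, hsu', mul_assoc, Units.mul_inv_cancel_left, Units.inv_mul, mul_one]
  have hy : aIm y = -1 := by
    rw [aIm_mul_mul_star, ← neg_neg (aIm x), hxu]
    simp only [mul_neg, neg_mul, hsu, hsu', Units.inv_mul_cancel_left, Units.mul_inv]
  have hsv : star (↑v⁻¹ : B) = ↑(star v)⁻¹ := (Units.coe_star_inv v).symm
  have hsv' : star (↑v : B) = ↑(star v) := (Units.coe_star v).symm
  set ψ := φ.conjugate ↑u ↑v⁻¹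
  have hψ1 : ψ 1 = 1 := by
    rw [conjugate_apply, mul_one, ← hxu, hxv]
    simp only [hsv, hsv', Units.inv_mul_cancel_left, Units.mul_inv]
  have hkad := ψ.star_map_mul_map_le_of_aIm_eq_smul_one hψ1 (s := -1) (by rw [hy, neg_one_smul])
  have hψy : star (ψ y) * ψ y = ↑v⁻¹ * (star (φ x) * (φ (-aIm x))⁻¹ʳ * φ x) * star ↑v⁻¹ := by
    rw [conjugate_apply, hxy, hxv, Units.ringInverse_mul_star]
    simp only [star_mul, star_star, mul_assoc]
  have hψyy : ψ (star y * y) = ↑v⁻¹ * φ (star x * (-aIm x)⁻¹ʳ * x) * star ↑v⁻¹ := by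
    rw [conjugate_apply, hxu, Units.ringInverse_mul_star]
    simp only [y, star_mul, star_star]
    simp only [hsu, hsu', mul_assoc, Units.mul_inv_cancel_left, Units.inv_mul, mul_one]
  rw [hψy, hψyy, ← sub_nonneg, ← sub_mul, ← mul_sub,
    v⁻¹.isUnit.star_right_conjugate_nonneg_iff, sub_nonneg] at hkad
  exact hkad

theorem ringInverse_map_ringInverse_aIm_le (φ : A →ₚ[ℂ] B) (hφ : φ 1 = 1) {a : A}
    (ha : IsStrictlyPositive (aIm a)) : (φ (aIm a)⁻¹ʳ)⁻¹ʳ ≤ aIm (φ a⁻¹ʳ)⁻¹ʳ := by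
  have haU := isUnit_of_isStrictlyPositive_aIm ha
  have hP := isStrictlyPositive_neg_aIm_ringInverse ha
  have hm := isStrictlyPositive_neg_aIm_map φ hφ hP
  have hb := isUnit_of_isStrictlyPositive_neg_aIm hm
  have hkey := star_map_mul_ringInverse_mul_map_le φ hφ hP
  have hrhs : star a⁻¹ʳ * (-aIm a⁻¹ʳ)⁻¹ʳ * a⁻¹ʳ = (aIm a)⁻¹ʳ := by
    rw [aIm_ringInverse haU, neg_neg, haU.ringInverse.ringInverse_mul_mul_star,
      Ring.inverse_inverse haU]
    simp only [mul_assoc]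
    rw [← mul_assoc (star _), ← star_mul, Ring.mul_inverse_cancel a haU, star_one, one_mul,
      mul_one]
  have hlhs : aIm (φ a⁻¹ʳ)⁻¹ʳ = (star (φ a⁻¹ʳ) * (-aIm (φ a⁻¹ʳ))⁻¹ʳ * φ a⁻¹ʳ)⁻¹ʳ := by
    rw [aIm_ringInverse hb, hb.ringInverse_star_mul_mul, Ring.inverse_inverse hm.isUnit, mul_neg,
      neg_mul]
  rw [hrhs, map_neg, map_aIm] at hkey
  rw [hlhs]
  exact CStarAlgebra.ringInverse_le_ringInverse hkey
    (hb.isStrictlyPositive_star_left_conjugate_iff.2 hm.ringInverse)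

end PositiveLinearMap

theorem stmt_2_general {A : Type*} [CStarAlgebra A] [PartialOrder A] [StarOrderedRing A]
    (E : A →ₗ[ℂ] A) (hE1 : E 1 = 1) (hEpos : ∀ a : A, 0 ≤ a → 0 ≤ E a)
    (a : A) (ha : StrictlyPos (aIm a)) :
    IsUnit a ∧
    StrictlyPos (-(aIm (E (Ring.inverse a)))) ∧
    IsUnit (E (Ring.inverse a)) ∧
    IsUnit (aIm a) ∧
    StrictlyPos (E (Ring.inverse (aIm a))) ∧
    Ring.inverse (E (Ring.inverse (aIm a))) ≤ aIm (Ring.inverse (E (Ring.inverse a))) := by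
  set φ := PositiveLinearMap.mk₀ E hEpos
  have hφ : φ 1 = 1 := hE1
  rw [strictlyPos_iff_isStrictlyPositive] at ha
  have hm : IsStrictlyPositive (-aIm (φ a⁻¹ʳ)) :=
    φ.isStrictlyPositive_neg_aIm_map hφ (isStrictlyPositive_neg_aIm_ringInverse ha)
  simp only [strictlyPos_iff_isStrictlyPositive]
  exact ⟨isUnit_of_isStrictlyPositive_aIm ha, hm, isUnit_of_isStrictlyPositive_neg_aIm hm,
    ha.isUnit, φ.isStrictlyPositive_map hφ ha.ringInverse,
    φ.ringInverse_map_ringInverse_aIm_le hφ ha⟩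

/-- For a unital positive map `E` from a C*-algebra `A` onto a C*-subalgebra `B` and
`a ∈ A` with `Im a > 0`: `a` is invertible, `-Im E[a⁻¹] > 0` (so `E[a⁻¹]` is invertible),
`(Im a)⁻¹` exists with `E[(Im a)⁻¹] > 0`, and `Im (E[a⁻¹]⁻¹) ≥ E[(Im a)⁻¹]⁻¹`. -/
theorem stmt_2 {A : Type*} [CStarAlgebra A] [PartialOrder A] [StarOrderedRing A]
    (B : StarSubalgebra ℂ A) (hBclosed : IsClosed (B : Set A))
    (E : A →ₗ[ℂ] A) (hErange : ∀ a : A, E a ∈ B)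
    (hE1 : E 1 = 1) (hEpos : ∀ a : A, 0 ≤ a → 0 ≤ E a)
    (a : A) (ha : StrictlyPos (aIm a)) :
    IsUnit a ∧
    StrictlyPos (-(aIm (E (Ring.inverse a)))) ∧
    IsUnit (E (Ring.inverse a)) ∧
    IsUnit (aIm a) ∧
    StrictlyPos (E (Ring.inverse (aIm a))) ∧
    Ring.inverse (E (Ring.inverse (aIm a))) ≤ aIm (Ring.inverse (E (Ring.inverse a))) :=
  stmt_2_general E hE1 hEpos a ha
end
end

section
/- Let A be a unital C*-algebra, B a unital C*-subalgebra containing the unit, E : A → B a conditional expectation, and x, y ∈ A selfadjoint with ‖x‖ + ‖y‖ > 0. Suppose ε > 0 and H_x, H_y : {w ∈ B : ‖w‖ < ε} → B are analytic maps such that for a ∈ {x, y} and every invertible w with ‖w‖ < ε for which w^{-1} − a and E[(w^{-1} − a)^{-1}] are invertible, H_a(w) = w^{-1} − E[(w^{-1} − a)^{-1}]^{-1}, and such that ‖H_a(w)‖ < 2(‖x‖ + ‖y‖) for all ‖w‖ < ε, a ∈ {x, y}. Then for every b ∈ B with ‖b‖ < (ε/41)·(‖x‖ + ‖y‖)^{-1}: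 the holomorphic map g_b(w) := b·H_x(H_y(w)·b) maps {w ∈ B : ‖w‖ < ε} into {w ∈ B : ‖w‖ < ε/2}, g_b has a unique fixed point ω₂(b) in {w : ‖w‖ < ε}, and for every w with ‖w‖ < ε the iterates g_b^{∘n}(w) converge in norm to ω₂(b) as n → ∞. (This is the Earle–Hamilton step in the proof of Theorem 2.2.) -/
/-!
The maps `H_x, H_y` are bounded by `2(‖x‖ + ‖y‖)` on the `ε`-ball, so the smallness of `b` makes
`g_b` map the `ε`-ball into the ball of radius `2ε/41`, far inside. The Schwarz lemma, applied on
balls of radius `3ε/4` around points of the closed `ε/4`-ball, then shows that `g_b` is a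
contraction with constant `16/123` there, and the Banach fixed point theorem applies.
-/

open Filter Metric Set

theorem Complex.dist_le_div_mul_dist_of_norm_le_on_ball {E F : Type*}
    [NormedAddCommGroup E] [NormedSpace ℂ E] [NormedAddCommGroup F] [NormedSpace ℂ F]
    {f : E → F} {r ρ M : ℝ} (hd : DifferentiableOn ℂ f (ball 0 r))
    (hM : ∀ w ∈ ball (0 : E) r, ‖f w‖ ≤ M) (hρ : ρ < r) {u v : E}
    (hu : u ∈ closedBall 0 ρ) (hv : v ∈ closedBall 0 ρ) :
    dist (f u) (f v) ≤ 2 * M / (r - ρ) * dist u v := by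
  rw [mem_closedBall_zero_iff] at hu hv
  have hu' : u ∈ ball (0 : E) r := mem_ball_zero_iff.mpr (by linarith)
  have hv' : v ∈ ball (0 : E) r := mem_ball_zero_iff.mpr (by linarith)
  have hball : ball u (r - ρ) ⊆ ball 0 r := fun w hw => by
    rw [mem_ball, dist_eq_norm] at hw
    rw [mem_ball_zero_iff]
    calc ‖w‖ ≤ ‖w - u‖ + ‖u‖ := norm_le_norm_sub_add w u
      _ < r := by linarith
  have hdist_le : ∀ w ∈ ball 0 r, dist (f w) (f u) ≤ 2 * M := fun w hw => by
    linarith [dist_le_norm_add_norm (f w) (f u), hM w hw, hM u hu']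
  rw [dist_comm (f u), dist_comm u]
  by_cases hvu : v ∈ ball u (r - ρ)
  · exact dist_le_div_mul_dist_of_mapsTo_ball (hd.mono hball)
      (fun w hw => hdist_le w (hball hw)) hvu
  · have hM0 : 0 ≤ M := (norm_nonneg _).trans (hM u hu')
    have hrρ : 0 < r - ρ := sub_pos.mpr hρ
    calc dist (f v) (f u) ≤ 2 * M := hdist_le v hv'
      _ = 2 * M / (r - ρ) * (r - ρ) := by field_simp
      _ ≤ 2 * M / (r - ρ) * dist v u := by
          gcongr
          simpa [mem_ball] using hvu

theorem exists_fixedPoint_of_mapsTo_of_lipschitzOnWith {X : Type*} [MetricSpace X] {g : X → X}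
    {U s : Set X} {K : NNReal} (hK : K < 1) (hs : IsComplete s) (hsU : s ⊆ U)
    (hgU : MapsTo g U s) (hL : LipschitzOnWith K g s) (hU : U.Nonempty) :
    ∃ p ∈ s, g p = p ∧ (∀ w ∈ U, g w = w → w = p) ∧
      ∀ w ∈ U, Tendsto (fun n => g^[n] w) atTop (nhds p) := by
  have hss : MapsTo g s s := hgU.mono_left hsU
  have hC : ContractingWith K (hss.restrict g s s) := ⟨hK, hL.mapsToRestrict hss⟩
  have hfix_eq : ∀ p ∈ s, ∀ q ∈ s, g p = p → g q = q → p = q := fun p hp q hq hgp hgq => by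
    have h := hL.dist_le_mul p hp q hq
    rw [hgp, hgq] at h
    have hK' : (K : ℝ) < 1 := hK
    exact dist_le_zero.mp (by nlinarith [dist_nonneg (x := p) (y := q)])
  have horbit : ∀ w ∈ U, ∃ p ∈ s, g p = p ∧ Tendsto (fun n => g^[n] w) atTop (nhds p) :=
    fun w hw => by
      obtain ⟨p, hps, hgp, htend, -⟩ := hC.exists_fixedPoint' hs hss (hgU hw) (edist_ne_top _ _)
      refine ⟨p, hps, hgp, (tendsto_add_atTop_iff_nat 1).mp ?_⟩
      simpa only [Function.iterate_succ_apply] using htend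
  obtain ⟨w₀, hw₀⟩ := hU
  obtain ⟨p, hps, hgp, -⟩ := horbit w₀ hw₀
  refine ⟨p, hps, hgp, fun w hw hgw => hfix_eq w (hgw ▸ hgU hw) p hps hgw hgp, fun w hw => ?_⟩
  obtain ⟨q, hqs, hgq, htend⟩ := horbit w hw
  rwa [hfix_eq q hqs p hps hgq hgp] at htend

section

variable {B : Type*} [NormedRing B] {H K : B → B} {b : B} {r C : ℝ}

theorem mapsTo_ball_mul_const (hK : ∀ w ∈ ball (0 : B) r, ‖K w‖ ≤ C) (hC : C * ‖b‖ < r) :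
    MapsTo (fun w => K w * b) (ball 0 r) (ball 0 r) := fun w hw => by
  rw [mem_ball_zero_iff]
  calc ‖K w * b‖ ≤ ‖K w‖ * ‖b‖ := norm_mul_le _ _
    _ ≤ C * ‖b‖ := by gcongr; exact hK w hw
    _ < r := hC

theorem norm_const_mul_comp_mul_const_le (hH : ∀ w ∈ ball (0 : B) r, ‖H w‖ ≤ C)
    (hK : ∀ w ∈ ball (0 : B) r, ‖K w‖ ≤ C) (hC : C * ‖b‖ < r) {w : B} (hw : w ∈ ball 0 r) :
    ‖b * H (K w * b)‖ ≤ ‖b‖ * C :=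
  calc ‖b * H (K w * b)‖ ≤ ‖b‖ * ‖H (K w * b)‖ := norm_mul_le _ _
    _ ≤ ‖b‖ * C := by gcongr; exact hH _ (mapsTo_ball_mul_const hK hC hw)

variable [NormedAlgebra ℂ B]

theorem analyticOnNhd_const_mul_comp_mul_const (hH : AnalyticOnNhd ℂ H (ball 0 r))
    (hKa : AnalyticOnNhd ℂ K (ball 0 r)) (hK : ∀ w ∈ ball (0 : B) r, ‖K w‖ ≤ C)
    (hC : C * ‖b‖ < r) :
    AnalyticOnNhd ℂ (fun w => b * H (K w * b)) (ball 0 r) :=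
  analyticOnNhd_const.mul <|
    hH.comp (hKa.mul analyticOnNhd_const) (mapsTo_ball_mul_const hK hC)

end

theorem stmt_6_general {A B : Type*} [CStarAlgebra A] [CStarAlgebra B]
    (x y : A) (hxy : 0 < ‖x‖ + ‖y‖)
    (ε : ℝ) (hε : 0 < ε)
    (Hx Hy : B → B)
    (hHxA : AnalyticOnNhd ℂ Hx (Metric.ball 0 ε))
    (hHyA : AnalyticOnNhd ℂ Hy (Metric.ball 0 ε))
    (hbound : ∀ w : B, ‖w‖ < ε →
      ‖Hx w‖ < 2 * (‖x‖ + ‖y‖) ∧ ‖Hy w‖ < 2 * (‖x‖ + ‖y‖))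
    (b : B) (hb : ‖b‖ < ε / 41 * (‖x‖ + ‖y‖)⁻¹) :
    AnalyticOnNhd ℂ (fun w => b * Hx (Hy w * b)) (Metric.ball 0 ε) ∧
    (∀ w : B, ‖w‖ < ε → ‖b * Hx (Hy w * b)‖ < ε / 2) ∧
    ∃ ω₂ : B, ‖ω₂‖ < ε ∧ b * Hx (Hy ω₂ * b) = ω₂ ∧
      (∀ w : B, ‖w‖ < ε → b * Hx (Hy w * b) = w → w = ω₂) ∧
      (∀ w : B, ‖w‖ < ε →
        Tendsto (fun n => (fun v => b * Hx (Hy v * b))^[n] w) atTop (nhds ω₂)) := by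
  set S := ‖x‖ + ‖y‖
  have hbS : ‖b‖ * S < ε / 41 := by rwa [← lt_div_iff₀ hxy, div_eq_mul_inv]
  have hHx' : ∀ w ∈ ball (0 : B) ε, ‖Hx w‖ ≤ 2 * S :=
    fun w hw => (hbound w (mem_ball_zero_iff.mp hw)).1.le
  have hHy' : ∀ w ∈ ball (0 : B) ε, ‖Hy w‖ ≤ 2 * S :=
    fun w hw => (hbound w (mem_ball_zero_iff.mp hw)).2.le
  have hC : 2 * S * ‖b‖ < ε := by linarith
  have hg := analyticOnNhd_const_mul_comp_mul_const hHxA hHyA hHy' hC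
  have hsmall : ∀ w ∈ ball (0 : B) ε, ‖b * Hx (Hy w * b)‖ ≤ 2 * ε / 41 := fun w hw =>
    (norm_const_mul_comp_mul_const_le hHx' hHy' hC hw).trans (by linarith)
  have hlip : LipschitzOnWith (16 / 123) (fun w => b * Hx (Hy w * b)) (closedBall 0 (ε / 4)) :=
    LipschitzOnWith.of_dist_le_mul fun u hu v hv => by
      convert Complex.dist_le_div_mul_dist_of_norm_le_on_ball hg.differentiableOn hsmall
        (by linarith) hu hv using 2
      push_cast
      field_simp
      norm_num
  obtain ⟨ω₂, hω₂, hfix, huniq, htend⟩ := exists_fixedPoint_of_mapsTo_of_lipschitzOnWith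
    (by norm_num) isClosed_closedBall.isComplete (closedBall_subset_ball (by linarith))
    (fun w hw => mem_closedBall_zero_iff.mpr ((hsmall w hw).trans (by linarith))) hlip
    ⟨0, mem_ball_self hε⟩
  refine ⟨hg, fun w hw => (hsmall w (mem_ball_zero_iff.mpr hw)).trans_lt (by linarith),
    ω₂, ?_, hfix, fun w hw => huniq w (mem_ball_zero_iff.mpr hw),
    fun w hw => htend w (mem_ball_zero_iff.mpr hw)⟩
  linarith [mem_closedBall_zero_iff.mp hω₂]

/-- Earle–Hamilton step in the proof of Theorem 2.2: if `H_x, H_y` are analytic maps on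
the ball of radius `ε` of the C*-subalgebra `B` (realized via an isometric unital
star-homomorphism `ι : B → A`) which agree with the h transforms of `x` and `y` wherever
the latter are defined, and are bounded in norm by `2(‖x‖ + ‖y‖)`, then for every `b ∈ B`
with `‖b‖ < (ε/41)(‖x‖ + ‖y‖)⁻¹`, the holomorphic map `g_b(w) = b·H_x(H_y(w)·b)` maps the
`ε`-ball into the `ε/2`-ball, has a unique fixed point `ω₂(b)` there, and its iterates
converge to `ω₂(b)` from any starting point in the `ε`-ball. -/
theorem stmt_6 {A B : Type*} [CStarAlgebra A] [CStarAlgebra B]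
    [PartialOrder A] [StarOrderedRing A] [PartialOrder B] [StarOrderedRing B]
    (ι : B →⋆ₐ[ℂ] A) (hι : Isometry ι)
    (E : A →ₗ[ℂ] B) (hE1 : E 1 = 1) (hEpos : ∀ a : A, 0 ≤ a → 0 ≤ E a)
    (hEbimod : ∀ b₁ b₂ : B, ∀ a : A, E (ι b₁ * a * ι b₂) = b₁ * E a * b₂)
    (x y : A) (hx : IsSelfAdjoint x) (hy : IsSelfAdjoint y) (hxy : 0 < ‖x‖ + ‖y‖)
    (ε : ℝ) (hε : 0 < ε)
    (Hx Hy : B → B)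
    (hHxA : AnalyticOnNhd ℂ Hx (Metric.ball 0 ε))
    (hHyA : AnalyticOnNhd ℂ Hy (Metric.ball 0 ε))
    (hHx : ∀ w : B, ‖w‖ < ε → IsUnit w → IsUnit (ι (Ring.inverse w) - x) →
      IsUnit (E (Ring.inverse (ι (Ring.inverse w) - x))) →
      Hx w = Ring.inverse w - Ring.inverse (E (Ring.inverse (ι (Ring.inverse w) - x))))
    (hHy : ∀ w : B, ‖w‖ < ε → IsUnit w → IsUnit (ι (Ring.inverse w) - y) →
      IsUnit (E (Ring.inverse (ι (Ring.inverse w) - y))) →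
      Hy w = Ring.inverse w - Ring.inverse (E (Ring.inverse (ι (Ring.inverse w) - y))))
    (hbound : ∀ w : B, ‖w‖ < ε →
      ‖Hx w‖ < 2 * (‖x‖ + ‖y‖) ∧ ‖Hy w‖ < 2 * (‖x‖ + ‖y‖))
    (b : B) (hb : ‖b‖ < ε / 41 * (‖x‖ + ‖y‖)⁻¹) :
    AnalyticOnNhd ℂ (fun w => b * Hx (Hy w * b)) (Metric.ball 0 ε) ∧
    (∀ w : B, ‖w‖ < ε → ‖b * Hx (Hy w * b)‖ < ε / 2) ∧
    ∃ ω₂ : B, ‖ω₂‖ < ε ∧ b * Hx (Hy ω₂ * b) = ω₂ ∧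
      (∀ w : B, ‖w‖ < ε → b * Hx (Hy w * b) = w → w = ω₂) ∧
      (∀ w : B, ‖w‖ < ε →
        Tendsto (fun n => (fun v => b * Hx (Hy v * b))^[n] w) atTop (nhds ω₂)) :=
  stmt_6_general x y hxy ε hε Hx Hy hHxA hHyA hbound b hb
end

section
/- Let A be a unital C*-algebra, B a unital C*-subalgebra containing the unit, E : A → B a conditional expectation, and x ∈ A. Let b, c ∈ B be invertible and suppose (cb)^{-1} − x and E[((cb)^{-1} − x)^{-1}] are invertible. Then c^{-1} − bx and E[(c^{-1} − bx)^{-1}] are invertible, and b·h_x(cb) = h_{bx}(c), i.e. b·( (cb)^{-1} − E[((cb)^{-1} − x)^{-1}]^{-1} ) = c^{-1} − E[(c^{-1} − bx)^{-1}]^{-1}. -/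
noncomputable section

private lemma ringInverse_eq_of {R : Type*} [Ring R] {y x : R} (hy : IsUnit y)
    (h : x * y = 1) : Ring.inverse y = x := by
  calc Ring.inverse y = x * y * Ring.inverse y := by rw [h, one_mul]
    _ = x * (y * Ring.inverse y) := by rw [mul_assoc]
    _ = x := by rw [Ring.mul_inverse_cancel y hy, mul_one]

private lemma ringInverse_eq_of' {R : Type*} [Ring R] {y x : R} (hy : IsUnit y)
    (h : y * x = 1) : Ring.inverse y = x := by
  calc Ring.inverse y = Ring.inverse y * (y * x) := by rw [h, mul_one]
    _ = Ring.inverse y * y * x := by rw [mul_assoc]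
    _ = x := by rw [Ring.inverse_mul_cancel y hy, one_mul]

/-- The twist identity `b·h_x(cb) = h_{bx}(c)` for a conditional expectation `E` from a
C*-algebra `A` onto a C*-subalgebra `B` (realized via an isometric unital
star-homomorphism `ι : B → A`): if `b, c ∈ B` are invertible and `(cb)⁻¹ - x` and
`E[((cb)⁻¹ - x)⁻¹]` are invertible, then `c⁻¹ - bx` and `E[(c⁻¹ - bx)⁻¹]` are invertible,
and `b·((cb)⁻¹ - E[((cb)⁻¹ - x)⁻¹]⁻¹) = c⁻¹ - E[(c⁻¹ - bx)⁻¹]⁻¹`. -/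
theorem stmt_7 {A B : Type*} [CStarAlgebra A] [CStarAlgebra B]
    [PartialOrder A] [StarOrderedRing A] [PartialOrder B] [StarOrderedRing B]
    (ι : B →⋆ₐ[ℂ] A) (hι : Isometry ι)
    (E : A →ₗ[ℂ] B) (hE1 : E 1 = 1) (hEpos : ∀ a : A, 0 ≤ a → 0 ≤ E a)
    (hEbimod : ∀ b₁ b₂ : B, ∀ a : A, E (ι b₁ * a * ι b₂) = b₁ * E a * b₂)
    (x : A) (b c : B) (hb : IsUnit b) (hc : IsUnit c)
    (h1 : IsUnit (ι (Ring.inverse (c * b)) - x))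
    (h2 : IsUnit (E (Ring.inverse (ι (Ring.inverse (c * b)) - x)))) :
    IsUnit (ι (Ring.inverse c) - ι b * x) ∧
    IsUnit (E (Ring.inverse (ι (Ring.inverse c) - ι b * x))) ∧
    b * (Ring.inverse (c * b) -
        Ring.inverse (E (Ring.inverse (ι (Ring.inverse (c * b)) - x)))) =
      Ring.inverse c - Ring.inverse (E (Ring.inverse (ι (Ring.inverse c) - ι b * x))) := by
  have hcb : IsUnit (c * b) := hc.mul hb
  set u : A := ι (Ring.inverse (c * b)) - x with hu
  -- b * (cb)⁻¹ = c⁻¹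
  have key1 : Ring.inverse c = b * Ring.inverse (c * b) := by
    refine ringInverse_eq_of' hc ?_
    rw [← mul_assoc, Ring.mul_inverse_cancel _ hcb]
  -- c⁻¹ - b x = b * u
  have keyA : ι (Ring.inverse c) - ι b * x = ι b * u := by
    rw [hu, mul_sub, ← map_mul, ← key1]
  have h1' : IsUnit (ι (Ring.inverse c) - ι b * x) := by
    rw [keyA]; exact (hb.map ι).mul h1
  -- (b u)⁻¹ = u⁻¹ * b⁻¹
  have key2 : Ring.inverse (ι b * u) = Ring.inverse u * ι (Ring.inverse b) := by
    refine ringInverse_eq_of ((hb.map ι).mul h1) ?_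
    calc Ring.inverse u * ι (Ring.inverse b) * (ι b * u)
        = Ring.inverse u * (ι (Ring.inverse b) * ι b) * u := by
          simp only [mul_assoc]
      _ = Ring.inverse u * ι (Ring.inverse b * b) * u := by rw [map_mul]
      _ = 1 := by rw [Ring.inverse_mul_cancel b hb, map_one, mul_one,
            Ring.inverse_mul_cancel u h1]
  have key3 : E (Ring.inverse u * ι (Ring.inverse b)) = E (Ring.inverse u) * Ring.inverse b := by
    have := hEbimod 1 (Ring.inverse b) (Ring.inverse u)
    rwa [map_one, one_mul, one_mul] at this
  have hbinv : IsUnit (Ring.inverse b) := by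
    rw [← hb.unit_spec, Ring.inverse_unit]; exact (hb.unit⁻¹).isUnit
  have h2' : IsUnit (E (Ring.inverse (ι (Ring.inverse c) - ι b * x))) := by
    rw [keyA, key2, key3]; exact h2.mul hbinv
  refine ⟨h1', h2', ?_⟩
  -- inverse of E(u⁻¹) b⁻¹ is b E(u⁻¹)⁻¹
  have key4 : Ring.inverse (E (Ring.inverse u) * Ring.inverse b)
      = b * Ring.inverse (E (Ring.inverse u)) := by
    refine ringInverse_eq_of (h2.mul hbinv) ?_
    calc b * Ring.inverse (E (Ring.inverse u)) * (E (Ring.inverse u) * Ring.inverse b)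
        = b * (Ring.inverse (E (Ring.inverse u)) * E (Ring.inverse u)) * Ring.inverse b := by
          simp only [mul_assoc]
      _ = 1 := by rw [Ring.inverse_mul_cancel _ h2, mul_one,
            Ring.mul_inverse_cancel b hb]
  rw [keyA, key2, key3, key4, mul_sub, ← key1]
end
end

section
/- Let A be a unital ring which is also a ℂ-algebra and let τ : A → ℂ be a ℂ-linear tracial functional, i.e. τ(uv) = τ(vu) for all u, v ∈ A. Let a₁, a₂, b₁, b₂ ∈ A, let X ∈ M₂(A) be the matrix with entries X_{ij} = a_i·a_j (i, j ∈ {1,2}), and let D = diag(b₁, b₂) ∈ M₂(A). Define T : M₂(A) → ℂ by T(m) = τ(m₁₁) + τ(m₂₂). Then for every integer n ≥ 1, T((X·D)^n) = τ((a₁b₁a₁ + a₂b₂a₂)^n). (This is the moment identity from the Introduction: the product X·D has, up to a Dirac mass at zero, the same distribution as a₁b₁a₁ + a₂b₂a₂.) -/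
noncomputable section

/-- The moment identity from the Introduction: for a tracial `ℂ`-linear functional `τ`
on a unital `ℂ`-algebra `A`, elements `a₁, a₂, b₁, b₂ ∈ A`, the matrix `X` with entries
`X_{ij} = aᵢaⱼ` and `D = diag(b₁, b₂)`, one has, with `T(m) = τ(m₁₁) + τ(m₂₂)`,
`T((XD)ⁿ) = τ((a₁b₁a₁ + a₂b₂a₂)ⁿ)` for every `n ≥ 1`. -/
theorem stmt_13 {A : Type*} [Ring A] [Algebra ℂ A]
    (τ : A →ₗ[ℂ] ℂ) (htr : ∀ u v : A, τ (u * v) = τ (v * u))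
    (a₁ a₂ b₁ b₂ : A)
    (X D : Matrix (Fin 2) (Fin 2) A)
    (hX : X = !![a₁ * a₁, a₁ * a₂; a₂ * a₁, a₂ * a₂])
    (hD : D = !![b₁, 0; 0, b₂]) :
    ∀ n : ℕ, 1 ≤ n →
      τ (((X * D) ^ n) 0 0) + τ (((X * D) ^ n) 1 1) =
        τ ((a₁ * b₁ * a₁ + a₂ * b₂ * a₂) ^ n) := by
  subst hX hD
  set c : A := a₁ * b₁ * a₁ + a₂ * b₂ * a₂ with hc
  have hXD : (!![a₁ * a₁, a₁ * a₂; a₂ * a₁, a₂ * a₂] : Matrix (Fin 2) (Fin 2) A)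
      * !![b₁, 0; 0, b₂]
      = !![a₁ * (a₁ * b₁), a₁ * (a₂ * b₂); a₂ * (a₁ * b₁), a₂ * (a₂ * b₂)] := by
    simp [Matrix.mul_fin_two, mul_assoc]
  rw [hXD]
  have key : ∀ m : ℕ,
      (!![a₁ * (a₁ * b₁), a₁ * (a₂ * b₂); a₂ * (a₁ * b₁), a₂ * (a₂ * b₂)] :
        Matrix (Fin 2) (Fin 2) A) ^ (m + 1)
      = !![a₁ * c ^ m * (a₁ * b₁), a₁ * c ^ m * (a₂ * b₂);
           a₂ * c ^ m * (a₁ * b₁), a₂ * c ^ m * (a₂ * b₂)] := by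
    intro m
    induction m with
    | zero => simp
    | succ m ih =>
      rw [pow_succ, ih, Matrix.mul_fin_two, hc]
      congr 1 <;> simp [pow_succ, mul_add, add_mul, mul_assoc]
  intro n hn
  obtain ⟨m, rfl⟩ := Nat.exists_eq_add_of_le hn
  rw [add_comm 1 m, key m]
  have e1 : τ (a₁ * c ^ m * (a₁ * b₁)) = τ (c ^ m * (a₁ * b₁ * a₁)) := by
    rw [mul_assoc, htr a₁, mul_assoc, mul_assoc]
  have e2 : τ (a₂ * c ^ m * (a₂ * b₂)) = τ (c ^ m * (a₂ * b₂ * a₂)) := by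
    rw [mul_assoc, htr a₂, mul_assoc, mul_assoc]
  have hshow : (!![a₁ * c ^ m * (a₁ * b₁), a₁ * c ^ m * (a₂ * b₂);
      a₂ * c ^ m * (a₁ * b₁), a₂ * c ^ m * (a₂ * b₂)] :
        Matrix (Fin 2) (Fin 2) A) 0 0 = a₁ * c ^ m * (a₁ * b₁) := rfl
  show τ (a₁ * c ^ m * (a₁ * b₁)) + τ (a₂ * c ^ m * (a₂ * b₂)) = _
  rw [e1, e2, ← map_add, ← mul_add, ← hc]
  have : c ^ m * c = c ^ (m + 1) := by rw [pow_succ]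
  rw [this]
end
end
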